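/- arXiv:0912.0440 — 3 statements merged into one kernel-verified Lean document; each statement's English description precedes it below -/
import Mathlib

section
/- Consider the controlled planar piecewise affine system ẋ₁ = K₁·s⁻(x₂,θ₂¹) − (γ₁⁰ + γ₁¹·ū·s⁺(x₁,θ₁¹)·s⁻(x₂,θ₂¹))·x₁, ẋ₂ = K₂·[s⁺(x₁,θ₁¹)·s⁺(x₂,θ₂¹) + s⁺(x₁,θ₁²)·s⁻(x₂,θ₂¹)] − γ₂⁰·x₂, with parameters γ₁⁰, γ₂⁰ > 0, γ₁¹ > 0, 0 < θ₁¹ < θ₁², 0 < θ₂¹, K₁ > γ₁⁰·θ₁², K₂ > γ₂⁰·θ₂¹, and where the constant feedback value ū satisfies (K₁ − γ₁⁰·θ₁²)/(γ₁¹·θ₁²) < ū < (K₁ − γ₁⁰·θ₁¹)/(γ₁¹·θ₁¹). Then every solution x defined on [0,∞) with x(0) ∈ (0, K₁/γ₁⁰) × (0, K₂/γ₂⁰) converges as t → ∞ to the point (K₁/(γ₁⁰ + γ₁¹·ū), 0), which is thus a globally attractive equilibrium (the limit cycle of the uncontrolled system disappears under this qualitative feedback law). -/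
/-!
Away from the thresholds the system is affine, so on any time interval on which `x₂` stays off
`θ₂¹` each coordinate follows an explicit exponential `A/L + (x(a) - A/L) e^{-L(t-a)}`. The times
at which `x₁` meets one of its thresholds do not spoil this: `ẋ₁ ≠ 0` near both thresholds
(because `θ₁¹ < K₁/(γ₁⁰+γ₁¹ū) < θ₁²`), so these times are isolated, hence countable.
With these formulas one follows the trajectory: `x₁` eventually drops below `θ₁²` and stays there;
then `x₂` falls below `θ₂¹` (while `x₂ > θ₂¹`, `x₁` decays, and once `x₁ < θ₁¹` so does `x₂`),
after which `x₂` decays to `0` while `x₁`, pushed above `θ₁¹`, relaxes to `K₁/(γ₁⁰+γ₁¹ū)`.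
-/

open MeasureTheory Filter

/-- Step function: `s⁺(x,θ) = 1` if `x > θ`, `0` if `x ≤ θ`. -/
noncomputable def sp (x θ : ℝ) : ℝ := if θ < x then 1 else 0

/-- Step function: `s⁻(x,θ) = 1 − s⁺(x,θ)`. -/
noncomputable def sm (x θ : ℝ) : ℝ := 1 - sp x θ

/-- `x` is a solution of `ẋ = f(x)` on the time set `S`. -/
def IsSolOn (f : ℝ × ℝ → ℝ × ℝ) (R : ℝ × ℝ → Prop) (x : ℝ → ℝ × ℝ) (S : Set ℝ) : Prop :=
  ContinuousOn x S ∧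
  volume {t | t ∈ S ∧ ¬ R (x t)} = 0 ∧
  ∀ t ∈ S, R (x t) → HasDerivWithinAt x (f (x t)) S t

open Set Topology

theorem IsPreconnected.forall_lt_or_forall_gt {s : Set ℝ} (hs : IsPreconnected s) {g : ℝ → ℝ}
    (hg : ContinuousOn g s) {c : ℝ} (hne : ∀ t ∈ s, g t ≠ c) :
    (∀ t ∈ s, g t < c) ∨ ∀ t ∈ s, c < g t := by
  by_contra! h
  obtain ⟨⟨t₁, ht₁, h₁⟩, t₂, ht₂, h₂⟩ := h
  obtain ⟨t, ht, hgt⟩ := hs.intermediate_value ht₂ ht₁ hg ⟨h₂, h₁⟩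
  exact hne t ht hgt

theorem IsClosed.exists_last_mem_Icc {E : Set ℝ} (hE : IsClosed E) {p q : ℝ} (hp : p ∈ E)
    (hpq : p ≤ q) : ∃ a ∈ E, p ≤ a ∧ a ≤ q ∧ ∀ t ∈ Ioc a q, t ∉ E := by
  have hbdd : BddAbove (E ∩ Icc p q) := ⟨q, fun t ht => ht.2.2⟩
  obtain ⟨haE, hpa, haq⟩ := (hE.inter isClosed_Icc).csSup_mem ⟨p, hp, le_rfl, hpq⟩ hbdd
  exact ⟨_, haE, hpa, haq, fun t ht htE =>
    (le_csSup hbdd ⟨htE, hpa.trans ht.1.le, ht.2⟩).not_gt ht.1⟩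

theorem IsClosed.exists_first_mem_Icc {E : Set ℝ} (hE : IsClosed E) {p q : ℝ} (hq : q ∈ E)
    (hpq : p ≤ q) : ∃ b ∈ E, p ≤ b ∧ b ≤ q ∧ ∀ t ∈ Ico p b, t ∉ E := by
  have hbdd : BddBelow (E ∩ Icc p q) := ⟨p, fun t ht => ht.2.1⟩
  obtain ⟨hbE, hpb, hbq⟩ := (hE.inter isClosed_Icc).csInf_mem ⟨q, hq, hpq, le_rfl⟩ hbdd
  exact ⟨_, hbE, hpb, hbq, fun t ht htE =>
    (csInf_le hbdd ⟨htE, ht.1, ht.2.le.trans hbq⟩).not_gt ht.2⟩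

theorem IsClosed.exists_consecutive_mem {E : Set ℝ} (hE : IsClosed E) {p q r : ℝ} (hp : p ∈ E)
    (hq : q ∈ E) (hr : r ∈ Icc p q) (hrE : r ∉ E) :
    ∃ a ∈ E, ∃ b ∈ E, p ≤ a ∧ a < b ∧ b ≤ q ∧ ∀ t ∈ Ioo a b, t ∉ E := by
  obtain ⟨a, haE, hpa, har, ha⟩ := hE.exists_last_mem_Icc hp hr.1
  obtain ⟨b, hbE, hrb, hbq, hb⟩ := hE.exists_first_mem_Icc hq hr.2
  have hra : a < r := lt_of_le_of_ne har (by rintro rfl; exact hrE haE)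
  have hrb : r < b := lt_of_le_of_ne hrb (by rintro rfl; exact hrE hbE)
  refine ⟨a, haE, b, hbE, hpa, hra.trans hrb, hbq, fun t ht htE => ?_⟩
  rcases le_or_gt t r with h | h
  · exact ha t ⟨ht.1, h⟩ htE
  · exact hb t ⟨h.le, ht.2⟩ htE

theorem ContinuousOn.exists_first_eq {g : ℝ → ℝ} {a b c : ℝ} (hg : ContinuousOn g (Icc a b))
    (hab : a ≤ b) (ha : g a < c) (hb : c ≤ g b) :
    ∃ σ ∈ Ioc a b, g σ = c ∧ ∀ t ∈ Ico a σ, g t < c := by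
  obtain ⟨t, ht, hgt⟩ := intermediate_value_Icc hab hg ⟨ha.le, hb⟩
  have hE : IsClosed (Icc a b ∩ g ⁻¹' {c}) :=
    hg.preimage_isClosed_of_isClosed isClosed_Icc isClosed_singleton
  obtain ⟨σ, ⟨hσI, hσc⟩, haσ, -, hσ⟩ := hE.exists_first_mem_Icc ⟨ht, hgt⟩ ht.1
  have haσ : a < σ := lt_of_le_of_ne haσ (by rintro rfl; exact ha.ne hσc)
  have hsub : Ico a σ ⊆ Icc a b := fun s hs => ⟨hs.1, hs.2.le.trans hσI.2⟩
  have hne : ∀ s ∈ Ico a σ, g s ≠ c := fun s hs hgs => hσ s hs ⟨hsub hs, hgs⟩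
  refine ⟨σ, ⟨haσ, hσI.2⟩, hσc, ?_⟩
  exact (isPreconnected_Ico.forall_lt_or_forall_gt (hg.mono hsub) hne).resolve_right
    fun h => (h a ⟨le_rfl, haσ⟩).not_gt ha

theorem eqOn_of_hasDerivAt_ne_zero {u : ℝ → ℝ} {a b w : ℝ} (hu : ContinuousOn u (Icc a b))
    (ha : u a = w) (hb : u b = w) (hder : ∀ t ∈ Ioo a b, u t ≠ w → ∃ d ≠ 0, HasDerivAt u d t) :
    ∀ t ∈ Icc a b, u t = w := by
  have hext : ∀ ξ ∈ Icc a b, u ξ ≠ w → ¬ (IsMaxOn u (Icc a b) ξ ∨ IsMinOn u (Icc a b) ξ) := by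
    rintro ξ hξ hξw hmaxmin
    have hξ' : ξ ∈ Ioo a b := ⟨lt_of_le_of_ne hξ.1 (by rintro rfl; exact hξw ha),
      lt_of_le_of_ne hξ.2 (by rintro rfl; exact hξw hb)⟩
    obtain ⟨d, hd, hdu⟩ := hder ξ hξ' hξw
    have hnhds : Icc a b ∈ 𝓝 ξ := Icc_mem_nhds hξ'.1 hξ'.2
    rcases hmaxmin with hmax | hmin
    · exact hd ((hmax.isLocalMax hnhds).hasDerivAt_eq_zero hdu)
    · exact hd ((hmin.isLocalMin hnhds).hasDerivAt_eq_zero hdu)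
  by_contra! h
  obtain ⟨r, hr, hrw⟩ := h
  rcases lt_or_gt_of_ne hrw with hlt | hgt
  · obtain ⟨ξ, hξ, hmin⟩ := isCompact_Icc.exists_isMinOn ⟨r, hr⟩ hu
    exact hext ξ hξ ((hmin hr).trans_lt hlt).ne (Or.inr hmin)
  · obtain ⟨ξ, hξ, hmax⟩ := isCompact_Icc.exists_isMaxOn ⟨r, hr⟩ hu
    exact hext ξ hξ (hgt.trans_le (hmax hr)).ne' (Or.inl hmax)

theorem countable_setOf_eq_of_hasDerivAt_ne_zero {u : ℝ → ℝ} {U : Set ℝ} {w : ℝ}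
    (hU : IsOpen U) (hu : ContinuousOn u U)
    (hder : ∀ t ∈ U, u t = w → ∀ᶠ s in 𝓝 t, u s ≠ w → ∃ d ≠ 0, HasDerivAt u d s)
    (hdense : ∀ a b, a < b → Icc a b ⊆ U → ∃ t ∈ Ioo a b, u t ≠ w) :
    {t ∈ U | u t = w}.Countable := by
  refine (countable_setOfPred_isolated_right_within (s := {t ∈ U | u t = w})).mono ?_
  rintro t ⟨htU, htw⟩
  refine ⟨⟨htU, htw⟩, ?_⟩
  obtain ⟨ε, hε, hball⟩ := Metric.mem_nhds_iff.mp ((hder t htU htw).and (hU.mem_nhds htU))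
  rw [← empty_mem_iff_bot, mem_nhdsWithin]
  refine ⟨Iio (t + ε), isOpen_Iio, by simpa using hε, ?_⟩
  rintro s ⟨hsε, ⟨-, hsw⟩, hts : t < s⟩
  have hsub : Icc t s ⊆ Metric.ball t ε := fun r hr => by
    rw [Metric.mem_ball, Real.dist_eq, abs_lt]
    constructor <;> linarith [hr.1, hr.2, show s < t + ε from hsε]
  obtain ⟨r, hr, hrw⟩ := hdense t s hts fun r hr => (hball (hsub hr)).2
  exact hrw (eqOn_of_hasDerivAt_ne_zero (hu.mono fun r hr => (hball (hsub hr)).2) htw hsw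
    (fun r hr => (hball (hsub (Ioo_subset_Icc_self hr))).1) r (Ioo_subset_Icc_self hr))

theorem eq_exp_of_hasDerivAt_off_countable {u : ℝ → ℝ} {A L a b : ℝ} {S : Set ℝ}
    (hS : S.Countable) (hL : L ≠ 0) (hab : a ≤ b) (hu : ContinuousOn u (Icc a b))
    (hder : ∀ t ∈ Ioo a b \ S, HasDerivAt u (A - L * u t) t) :
    u b = A / L + (u a - A / L) * Real.exp (-L * (b - a)) := by
  set v : ℝ → ℝ := fun t => (u t - A / L) * Real.exp (L * (t - a))
  have hv : ContinuousOn v (Icc a b) := (hu.sub continuousOn_const).mul (by fun_prop)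
  have hv' : ∀ t ∈ Ioo a b \ S, HasDerivAt v 0 t := by
    intro t ht
    have hexp : HasDerivAt (fun s => Real.exp (L * (s - a))) (Real.exp (L * (t - a)) * L) t := by
      simpa using (((hasDerivAt_id t).sub_const a).const_mul L).exp
    refine (((hder t ht).sub_const (A / L)).mul hexp).congr_deriv ?_
    field_simp
    ring
  have hvab : v b = v a := by
    have := integral_eq_of_hasDerivAt_off_countable_of_le v (fun _ => 0) hab hS hv hv'
      intervalIntegrable_const
    simp only [intervalIntegral.integral_zero] at this
    linarith
  simp only [v, sub_self, mul_zero, Real.exp_zero, mul_one] at hvab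
  rw [← hvab, mul_assoc, ← Real.exp_add, neg_mul, add_neg_cancel, Real.exp_zero, mul_one]
  ring

theorem tendsto_of_forall_eq_exp {u : ℝ → ℝ} {C L a : ℝ} (hL : 0 < L)
    (hu : ∀ t ≥ a, u t = C + (u a - C) * Real.exp (-L * (t - a))) : Tendsto u atTop (𝓝 C) := by
  have hexp : Tendsto (fun t => Real.exp (-L * (t - a))) atTop (𝓝 0) :=
    Real.tendsto_exp_atBot.comp <|
      (tendsto_atTop_add_const_right atTop (-a) tendsto_id).const_mul_atTop_of_neg (by linarith)
  have := (hexp.const_mul (u a - C)).const_add C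
  rw [mul_zero, add_zero] at this
  exact this.congr' ((eventually_ge_atTop a).mono fun t ht => (hu t ht).symm)

theorem add_sub_mul_exp_lt {T y c L d : ℝ} (hL : 0 < L) (hd : 0 < d) (hT : T < c) (hy : y ≤ c) :
    T + (y - T) * Real.exp (-L * d) < c := by
  have hE0 := Real.exp_pos (-L * d)
  have hE1 : Real.exp (-L * d) < 1 := Real.exp_lt_one_iff.mpr (by nlinarith)
  nlinarith

theorem forall_lt_of_eq_exp {u : ℝ → ℝ} {a c T L : ℝ} (hL : 0 < L) (hu : ContinuousOn u (Ici a))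
    (hT : T < c) (ha : u a < c)
    (hsol : ∀ b > a, (∀ r ∈ Ico a b, u r < c) → u b = T + (u a - T) * Real.exp (-L * (b - a))) :
    ∀ t ≥ a, u t < c := by
  intro t ht
  by_contra! h
  obtain ⟨σ, hσ, hσc, hbefore⟩ := (hu.mono Icc_subset_Ici_self).exists_first_eq ht ha h
  have := hsol σ hσ.1 hbefore
  rw [hσc] at this
  exact (add_sub_mul_exp_lt hL (sub_pos.2 hσ.1) hT ha.le).ne' this

theorem sp_of_lt {x θ : ℝ} (h : θ < x) : sp x θ = 1 := if_pos h

theorem sp_of_le {x θ : ℝ} (h : x ≤ θ) : sp x θ = 0 := if_neg h.not_gt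

structure ControlledSystem where
  K₁ : ℝ
  K₂ : ℝ
  γ10 : ℝ
  γ20 : ℝ
  γ11 : ℝ
  θ11 : ℝ
  θ12 : ℝ
  θ21 : ℝ
  ubar : ℝ
  γ10_pos : 0 < γ10
  γ20_pos : 0 < γ20
  γ11_pos : 0 < γ11
  θ11_pos : 0 < θ11
  θ11_lt_θ12 : θ11 < θ12
  θ21_pos : 0 < θ21
  γ10_mul_θ12_lt : γ10 * θ12 < K₁
  γ20_mul_θ21_lt : γ20 * θ21 < K₂
  ubar_gt : (K₁ - γ10 * θ12) / (γ11 * θ12) < ubar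
  ubar_lt : ubar < (K₁ - γ10 * θ11) / (γ11 * θ11)

namespace ControlledSystem

variable (P : ControlledSystem)

noncomputable def field (p : ℝ × ℝ) : ℝ × ℝ :=
  (P.K₁ * sm p.2 P.θ21 - (P.γ10 + P.γ11 * P.ubar * sp p.1 P.θ11 * sm p.2 P.θ21) * p.1,
   P.K₂ * (sp p.1 P.θ11 * sp p.2 P.θ21 + sp p.1 P.θ12 * sm p.2 P.θ21) - P.γ20 * p.2)

def Regular (p : ℝ × ℝ) : Prop := p.1 ≠ P.θ11 ∧ p.1 ≠ P.θ12 ∧ p.2 ≠ P.θ21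

def IsSolution (x : ℝ → ℝ × ℝ) : Prop := IsSolOn P.field P.Regular x (Ici 0)

/-- The decay rate of `x₁` in the box `x₁ > θ₁¹, x₂ < θ₂¹`, where the feedback is switched on. -/
def rate : ℝ := P.γ10 + P.γ11 * P.ubar

theorem θ12_pos : 0 < P.θ12 := P.θ11_pos.trans P.θ11_lt_θ12

theorem rate_mul_θ11_lt : P.rate * P.θ11 < P.K₁ := by
  have := (lt_div_iff₀ (mul_pos P.γ11_pos P.θ11_pos)).mp P.ubar_lt
  unfold rate
  linarith

theorem lt_rate_mul_θ12 : P.K₁ < P.rate * P.θ12 := by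
  have := (div_lt_iff₀ (mul_pos P.γ11_pos P.θ12_pos)).mp P.ubar_gt
  unfold rate
  linarith

theorem rate_pos : 0 < P.rate := by
  nlinarith [P.rate_mul_θ11_lt, P.lt_rate_mul_θ12, P.θ11_lt_θ12]

theorem θ11_lt_equilibrium : P.θ11 < P.K₁ / P.rate := by
  rw [lt_div_iff₀ P.rate_pos, mul_comm]
  exact P.rate_mul_θ11_lt

theorem equilibrium_lt_θ12 : P.K₁ / P.rate < P.θ12 := by
  rw [div_lt_iff₀ P.rate_pos, mul_comm]
  exact P.lt_rate_mul_θ12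

theorem θ11_lt_K₁_div_γ10 : P.θ11 < P.K₁ / P.γ10 := by
  rw [lt_div_iff₀ P.γ10_pos]
  nlinarith [P.γ10_mul_θ12_lt, P.θ11_lt_θ12, P.γ10_pos]

variable {P} {p : ℝ × ℝ}

theorem field_fst_of_θ21_lt (h2 : P.θ21 < p.2) : (P.field p).1 = -(P.γ10 * p.1) := by
  simp only [field, sm, sp_of_lt h2]
  ring

theorem field_fst_of_le_θ21_of_le_θ11 (h2 : p.2 ≤ P.θ21) (h1 : p.1 ≤ P.θ11) :
    (P.field p).1 = P.K₁ - P.γ10 * p.1 := by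
  simp only [field, sm, sp_of_le h2, sp_of_le h1]
  ring

theorem field_fst_of_le_θ21_of_θ11_lt (h2 : p.2 ≤ P.θ21) (h1 : P.θ11 < p.1) :
    (P.field p).1 = P.K₁ - P.rate * p.1 := by
  simp only [field, rate, sm, sp_of_le h2, sp_of_lt h1]
  ring

theorem field_snd_of_le_θ11 (h1 : p.1 ≤ P.θ11) : (P.field p).2 = -(P.γ20 * p.2) := by
  simp only [field, sp_of_le h1, sp_of_le (h1.trans P.θ11_lt_θ12.le)]
  ring

theorem field_snd_of_le_θ21_of_le_θ12 (h2 : p.2 ≤ P.θ21) (h1 : p.1 ≤ P.θ12) :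
    (P.field p).2 = -(P.γ20 * p.2) := by
  simp only [field, sp_of_le h2, sp_of_le h1]
  ring

theorem field_snd_of_le_θ21_of_θ12_lt (h2 : p.2 ≤ P.θ21) (h1 : P.θ12 < p.1) :
    (P.field p).2 = P.K₂ - P.γ20 * p.2 := by
  simp only [field, sm, sp_of_le h2, sp_of_lt h1]
  ring

theorem field_snd_of_θ21_lt_of_θ11_lt (h2 : P.θ21 < p.2) (h1 : P.θ11 < p.1) :
    (P.field p).2 = P.K₂ - P.γ20 * p.2 := by
  simp only [field, sm, sp_of_lt h2, sp_of_lt h1]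
  ring

theorem field_fst_ne_zero (h2 : p.2 ≠ P.θ21) (h0 : 0 < p.1) (hne : p.1 ≠ P.K₁ / P.rate) :
    (P.field p).1 ≠ 0 := by
  rcases h2.lt_or_gt with h2 | h2
  · rcases le_or_gt p.1 P.θ11 with h1 | h1
    · rw [field_fst_of_le_θ21_of_le_θ11 h2.le h1]
      nlinarith [P.γ10_pos, (lt_div_iff₀ P.γ10_pos).mp P.θ11_lt_K₁_div_γ10]
    · rw [field_fst_of_le_θ21_of_θ11_lt h2.le h1, sub_ne_zero]
      intro h
      exact hne (by rw [h, mul_div_cancel_left₀ _ P.rate_pos.ne'])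
  · rw [field_fst_of_θ21_lt h2]
    nlinarith [P.γ10_pos]

end ControlledSystem

namespace ControlledSystem.IsSolution

variable {P : ControlledSystem} {x : ℝ → ℝ × ℝ}

theorem continuousOn_fst (hx : P.IsSolution x) : ContinuousOn (fun t => (x t).1) (Ici 0) :=
  continuous_fst.comp_continuousOn hx.1

theorem continuousOn_snd (hx : P.IsSolution x) : ContinuousOn (fun t => (x t).2) (Ici 0) :=
  continuous_snd.comp_continuousOn hx.1

theorem exists_regular (hx : P.IsSolution x) {a b : ℝ} (ha : 0 ≤ a) (hab : a < b) :
    ∃ t ∈ Ioo a b, P.Regular (x t) := by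
  by_contra! h
  have hsub : Ioo a b ⊆ {t | t ∈ Ici 0 ∧ ¬ P.Regular (x t)} := fun t ht =>
    ⟨ha.trans ht.1.le, h t ht⟩
  have hnull := measure_mono_null hsub hx.2.1
  rw [Real.volume_Ioo, ENNReal.ofReal_eq_zero] at hnull
  linarith

theorem hasDerivAt (hx : P.IsSolution x) {t : ℝ} (ht : 0 < t) (hr : P.Regular (x t)) :
    HasDerivAt x (P.field (x t)) t :=
  (hx.2.2 t ht.le hr).hasDerivAt (Ici_mem_nhds ht)

theorem hasDerivAt_fst (hx : P.IsSolution x) {t : ℝ} (ht : 0 < t) (hr : P.Regular (x t)) :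
    HasDerivAt (fun s => (x s).1) (P.field (x t)).1 t :=
  (ContinuousLinearMap.fst ℝ ℝ ℝ).hasFDerivAt.comp_hasDerivAt t (hx.hasDerivAt ht hr)

theorem hasDerivAt_snd (hx : P.IsSolution x) {t : ℝ} (ht : 0 < t) (hr : P.Regular (x t)) :
    HasDerivAt (fun s => (x s).2) (P.field (x t)).2 t :=
  (ContinuousLinearMap.snd ℝ ℝ ℝ).hasFDerivAt.comp_hasDerivAt t (hx.hasDerivAt ht hr)

theorem isClosed_setOf_snd_eq (hx : P.IsSolution x) : IsClosed {t | 0 ≤ t ∧ (x t).2 = P.θ21} :=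
  hx.continuousOn_snd.preimage_isClosed_of_isClosed isClosed_Ici isClosed_singleton

/-- Near either threshold of `x₁` we have `ẋ₁ ≠ 0`, so `x₁` meets it only at isolated times. -/
theorem countable_setOf_fst_eq (hx : P.IsSolution x) {a b w : ℝ} (ha : 0 ≤ a)
    (hne : ∀ t ∈ Ioo a b, (x t).2 ≠ P.θ21) (hw : w = P.θ11 ∨ w = P.θ12) :
    {t ∈ Ioo a b | (x t).1 = w}.Countable := by
  have hw0 : 0 < w := by rcases hw with rfl | rfl; exacts [P.θ11_pos, P.θ12_pos]
  have hwK : w ≠ P.K₁ / P.rate := by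
    rcases hw with rfl | rfl
    exacts [P.θ11_lt_equilibrium.ne, P.equilibrium_lt_θ12.ne']
  have hregular : ∀ t ∈ Ioo a b, (x t).1 ≠ w → (x t).1 ∉ ({P.θ11, P.θ12} \ {w} : Set ℝ) →
      P.Regular (x t) := fun t ht hw' hother =>
    ⟨fun h => hother ⟨Or.inl h, hw'⟩, fun h => hother ⟨Or.inr h, hw'⟩, hne t ht⟩
  refine countable_setOf_eq_of_hasDerivAt_ne_zero isOpen_Ioo
    (hx.continuousOn_fst.mono fun t ht => ha.trans ht.1.le) ?_ ?_
  · intro t ht htw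
    have hV : Ioi 0 ∩ {P.K₁ / P.rate}ᶜ ∩ ({P.θ11, P.θ12} \ {w} : Set ℝ)ᶜ ∈ 𝓝 (x t).1 := by
      refine ((isOpen_Ioi.inter isOpen_compl_singleton).inter
        ((Set.toFinite _).isClosed.isOpen_compl)).mem_nhds ?_
      rw [htw]
      exact ⟨⟨hw0, hwK⟩, fun h => h.2 rfl⟩
    have hcont := hx.continuousOn_fst.continuousAt (Ici_mem_nhds (ha.trans_lt ht.1))
    filter_upwards [hcont.preimage_mem_nhds hV, isOpen_Ioo.mem_nhds ht]
      with s ⟨⟨hs0, hsK⟩, hsother⟩ hs hsw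
    have hr := hregular s hs hsw hsother
    exact ⟨_, P.field_fst_ne_zero (hne s hs) hs0 hsK, hx.hasDerivAt_fst (ha.trans_lt hs.1) hr⟩
  · intro c d hcd hsub
    obtain ⟨t, ht, hr⟩ := hx.exists_regular (ha.trans (hsub ⟨le_rfl, hcd.le⟩).1.le) hcd
    exact ⟨t, ht, by rcases hw with rfl | rfl; exacts [hr.1, hr.2.1]⟩

theorem countable_setOf_not_regular (hx : P.IsSolution x) {a b : ℝ} (ha : 0 ≤ a)
    (hne : ∀ t ∈ Ioo a b, (x t).2 ≠ P.θ21) : {t ∈ Ioo a b | ¬ P.Regular (x t)}.Countable := by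
  refine ((hx.countable_setOf_fst_eq ha hne (Or.inl rfl)).union
    (hx.countable_setOf_fst_eq ha hne (Or.inr rfl))).mono ?_
  rintro t ⟨ht, hr⟩
  by_cases h1 : (x t).1 = P.θ11
  · exact Or.inl ⟨ht, h1⟩
  by_cases h2 : (x t).1 = P.θ12
  · exact Or.inr ⟨ht, h2⟩
  exact absurd ⟨h1, h2, hne t ht⟩ hr

theorem fst_eq_exp (hx : P.IsSolution x) {a b A L : ℝ} (ha : 0 ≤ a) (hab : a ≤ b) (hL : L ≠ 0)
    (hne : ∀ t ∈ Ioo a b, (x t).2 ≠ P.θ21)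
    (hf : ∀ t ∈ Ioo a b, P.Regular (x t) → (P.field (x t)).1 = A - L * (x t).1) :
    (x b).1 = A / L + ((x a).1 - A / L) * Real.exp (-L * (b - a)) := by
  refine eq_exp_of_hasDerivAt_off_countable (hx.countable_setOf_not_regular ha hne) hL hab
    (hx.continuousOn_fst.mono fun t ht => ha.trans ht.1) fun t ⟨ht, hnot⟩ => ?_
  have hr : P.Regular (x t) := by_contra fun h => hnot ⟨ht, h⟩
  rw [← hf t ht hr]
  exact hx.hasDerivAt_fst (ha.trans_lt ht.1) hr

theorem snd_eq_exp (hx : P.IsSolution x) {a b A : ℝ} (ha : 0 ≤ a) (hab : a ≤ b)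
    (hne : ∀ t ∈ Ioo a b, (x t).2 ≠ P.θ21)
    (hf : ∀ t ∈ Ioo a b, P.Regular (x t) → (P.field (x t)).2 = A - P.γ20 * (x t).2) :
    (x b).2 = A / P.γ20 + ((x a).2 - A / P.γ20) * Real.exp (-P.γ20 * (b - a)) := by
  refine eq_exp_of_hasDerivAt_off_countable (hx.countable_setOf_not_regular ha hne)
    P.γ20_pos.ne' hab (hx.continuousOn_snd.mono fun t ht => ha.trans ht.1) fun t ⟨ht, hnot⟩ => ?_
  have hr : P.Regular (x t) := by_contra fun h => hnot ⟨ht, h⟩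
  rw [← hf t ht hr]
  exact hx.hasDerivAt_snd (ha.trans_lt ht.1) hr

theorem tendsto_fst (hx : P.IsSolution x) {a A L : ℝ} (ha : 0 ≤ a) (hL : 0 < L)
    (hne : ∀ t > a, (x t).2 ≠ P.θ21)
    (hf : ∀ t > a, P.Regular (x t) → (P.field (x t)).1 = A - L * (x t).1) :
    Tendsto (fun t => (x t).1) atTop (𝓝 (A / L)) :=
  tendsto_of_forall_eq_exp hL fun _ ht =>
    hx.fst_eq_exp ha ht hL.ne' (fun s hs => hne s hs.1) fun s hs => hf s hs.1

theorem tendsto_snd (hx : P.IsSolution x) {a A : ℝ} (ha : 0 ≤ a)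
    (hne : ∀ t > a, (x t).2 ≠ P.θ21)
    (hf : ∀ t > a, P.Regular (x t) → (P.field (x t)).2 = A - P.γ20 * (x t).2) :
    Tendsto (fun t => (x t).2) atTop (𝓝 (A / P.γ20)) :=
  tendsto_of_forall_eq_exp P.γ20_pos fun _ ht =>
    hx.snd_eq_exp ha ht (fun s hs => hne s hs.1) fun s hs => hf s hs.1

theorem target_eq_of_snd_returns (hx : P.IsSolution x) {a b C : ℝ} (ha : 0 ≤ a) (hab : a < b)
    (hxa : (x a).2 = P.θ21) (hxb : (x b).2 = P.θ21) (hne : ∀ t ∈ Ioo a b, (x t).2 ≠ P.θ21)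
    (hf : ∀ t ∈ Ioo a b, P.Regular (x t) → (P.field (x t)).2 = C - P.γ20 * (x t).2) :
    C = P.γ20 * P.θ21 := by
  have h := hx.snd_eq_exp ha hab.le hne hf
  rw [hxa, hxb] at h
  have hE : Real.exp (-P.γ20 * (b - a)) < 1 :=
    Real.exp_lt_one_iff.mpr (by nlinarith [P.γ20_pos])
  have h0 : (P.θ21 - C / P.γ20) * (1 - Real.exp (-P.γ20 * (b - a))) = 0 := by linarith
  rcases mul_eq_zero.mp h0 with h0 | h0
  · rw [sub_eq_zero, eq_div_iff P.γ20_pos.ne'] at h0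
    linarith
  · linarith

theorem exists_consecutive_snd_eq (hx : P.IsSolution x) {p q : ℝ} (hp : 0 ≤ p) (hpq : p < q)
    (hxp : (x p).2 = P.θ21) (hxq : (x q).2 = P.θ21) :
    ∃ a b, p ≤ a ∧ a < b ∧ b ≤ q ∧ (x a).2 = P.θ21 ∧ (x b).2 = P.θ21 ∧
      ∀ t ∈ Ioo a b, (x t).2 ≠ P.θ21 := by
  obtain ⟨r, hr, hreg⟩ := hx.exists_regular hp hpq
  obtain ⟨a, ⟨-, hxa⟩, b, ⟨-, hxb⟩, hpa, hab, hbq, hgap⟩ :=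
    hx.isClosed_setOf_snd_eq.exists_consecutive_mem ⟨hp, hxp⟩ ⟨hp.trans hpq.le, hxq⟩
      (Ioo_subset_Icc_self hr) fun h => hreg.2.2 h.2
  exact ⟨a, b, hpa, hab, hbq, hxa, hxb, fun t ht h => hgap t ht ⟨hp.trans (hpa.trans ht.1.le), h⟩⟩

theorem snd_eventually_ne_or_exists_consecutive (hx : P.IsSolution x) {T : ℝ} (hT : 0 ≤ T) :
    (∃ s ≥ T, ∀ t > s, (x t).2 ≠ P.θ21) ∨
      ∃ a b, T ≤ a ∧ a < b ∧ (x a).2 = P.θ21 ∧ (x b).2 = P.θ21 ∧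
        ∀ t ∈ Ioo a b, (x t).2 ≠ P.θ21 := by
  by_cases h : ∃ p ≥ T, (x p).2 = P.θ21 ∧ ∃ q > p, (x q).2 = P.θ21
  · obtain ⟨p, hp, hxp, q, hpq, hxq⟩ := h
    obtain ⟨a, b, hpa, hab, -, hxa, hxb, hne⟩ :=
      hx.exists_consecutive_snd_eq (hT.trans hp) hpq hxp hxq
    exact Or.inr ⟨a, b, hp.trans hpa, hab, hxa, hxb, hne⟩
  push Not at h
  by_cases h' : ∃ p ≥ T, (x p).2 = P.θ21
  · obtain ⟨p, hp, hxp⟩ := h'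
    exact Or.inl ⟨p, hp, h p hp hxp⟩
  push Not at h'
  exact Or.inl ⟨T, le_rfl, fun t ht => h' t ht.le⟩

theorem exists_fst_lt_θ12 (hx : P.IsSolution x) : ∃ T ≥ 0, (x T).1 < P.θ12 := by
  by_contra! h
  rcases hx.snd_eventually_ne_or_exists_consecutive le_rfl with
    ⟨s, hs, hne⟩ | ⟨a, b, ha, hab, hxa, hxb, hne⟩
  · obtain ⟨l, hl, hlim⟩ : ∃ l < P.θ12, Tendsto (fun t => (x t).1) atTop (𝓝 l) := by
      rcases isPreconnected_Ioi.forall_lt_or_forall_gt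
        (hx.continuousOn_snd.mono fun t (ht : s < t) => hs.trans ht.le) hne with hlow | hhigh
      · exact ⟨_, P.equilibrium_lt_θ12, hx.tendsto_fst hs P.rate_pos hne fun t ht _ =>
          P.field_fst_of_le_θ21_of_θ11_lt (hlow t ht).le
            (P.θ11_lt_θ12.trans_le (h t (hs.trans ht.le)))⟩
      · have := hx.tendsto_fst (A := 0) hs P.γ10_pos hne fun t ht _ => by
          rw [P.field_fst_of_θ21_lt (hhigh t ht), zero_sub]
        rw [zero_div] at this
        exact ⟨0, P.θ12_pos, this⟩
    obtain ⟨t, ht, ht0⟩ := ((hlim.eventually (gt_mem_nhds hl)).and (eventually_ge_atTop 0)).exists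
    exact (h t ht0).not_gt ht
  · refine P.γ20_mul_θ21_lt.ne' (hx.target_eq_of_snd_returns ha hab hxa hxb hne fun t ht hr => ?_)
    have h1 := h t (ha.trans ht.1.le)
    rcases hr.2.2.lt_or_gt with h2 | h2
    · exact P.field_snd_of_le_θ21_of_θ12_lt h2.le (lt_of_le_of_ne h1 (Ne.symm hr.2.1))
    · exact P.field_snd_of_θ21_lt_of_θ11_lt h2 (P.θ11_lt_θ12.trans_le h1)

theorem fst_lt_of_equilibrium_lt (hx : P.IsSolution x) {a b : ℝ} (ha : 0 ≤ a) (hab : a < b)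
    (hne : ∀ t ∈ Ioo a b, (x t).2 ≠ P.θ21) (h : ∀ t ∈ Icc a b, P.K₁ / P.rate < (x t).1) :
    (x b).1 < (x a).1 := by
  have hθ11 : ∀ t ∈ Ioo a b, P.θ11 < (x t).1 := fun t ht =>
    P.θ11_lt_equilibrium.trans (h t (Ioo_subset_Icc_self ht))
  have hxa := h a (left_mem_Icc.2 hab.le)
  rcases isPreconnected_Ioo.forall_lt_or_forall_gt
    (hx.continuousOn_snd.mono fun t ht => ha.trans ht.1.le) hne with hlow | hhigh
  · rw [hx.fst_eq_exp ha hab.le P.rate_pos.ne' hne fun t ht _ =>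
      P.field_fst_of_le_θ21_of_θ11_lt (hlow t ht).le (hθ11 t ht)]
    exact add_sub_mul_exp_lt P.rate_pos (sub_pos.2 hab) hxa le_rfl
  · rw [hx.fst_eq_exp (A := 0) ha hab.le P.γ10_pos.ne' hne fun t ht _ => by
      rw [P.field_fst_of_θ21_lt (hhigh t ht), zero_sub], zero_div]
    exact add_sub_mul_exp_lt P.γ10_pos (sub_pos.2 hab)
      ((P.θ11_pos.trans P.θ11_lt_equilibrium).trans hxa) le_rfl

/-- In the strip `θ₁¹ < x₁ ≤ θ₁²` the threshold `θ₂¹` repels `x₂` from both sides. -/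
theorem subsingleton_setOf_snd_eq (hx : P.IsSolution x) {a b : ℝ} (ha : 0 ≤ a)
    (h : ∀ t ∈ Ioo a b, P.θ11 < (x t).1 ∧ (x t).1 ≤ P.θ12) :
    {t ∈ Ioo a b | (x t).2 = P.θ21}.Subsingleton := by
  suffices hlt : ∀ p ∈ Ioo a b, ∀ q ∈ Ioo a b, p < q → (x p).2 = P.θ21 → (x q).2 = P.θ21 →
      False by
    rintro p ⟨hp, hxp⟩ q ⟨hq, hxq⟩
    by_contra hpq
    rcases lt_or_gt_of_ne hpq with hpq | hqp
    exacts [hlt p hp q hq hpq hxp hxq, hlt q hq p hp hqp hxq hxp]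
  intro p hp q hq hpq hxp hxq
  obtain ⟨c, d, hpc, hcd, hdq, hxc, hxd, hne⟩ :=
    hx.exists_consecutive_snd_eq (ha.trans hp.1.le) hpq hxp hxq
  have hc : 0 ≤ c := ha.trans (hp.1.le.trans hpc)
  have hsub : ∀ t ∈ Ioo c d, t ∈ Ioo a b := fun t ht =>
    ⟨hp.1.trans_le (hpc.trans ht.1.le), ht.2.trans_le (hdq.trans hq.2.le)⟩
  rcases isPreconnected_Ioo.forall_lt_or_forall_gt
    (hx.continuousOn_snd.mono fun t ht => hc.trans ht.1.le) hne with hlow | hhigh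
  · refine (mul_pos P.γ20_pos P.θ21_pos).ne (hx.target_eq_of_snd_returns hc hcd hxc hxd hne
      fun t ht _ => ?_)
    rw [P.field_snd_of_le_θ21_of_le_θ12 (hlow t ht).le (h t (hsub t ht)).2, zero_sub]
  · exact P.γ20_mul_θ21_lt.ne' (hx.target_eq_of_snd_returns hc hcd hxc hxd hne fun t ht _ =>
      P.field_snd_of_θ21_lt_of_θ11_lt (hhigh t ht) (h t (hsub t ht)).1)

theorem fst_lt_θ12_of_le (hx : P.IsSolution x) {t₀ : ℝ} (h0 : 0 ≤ t₀)
    (hlt : (x t₀).1 < P.θ12) : ∀ t ≥ t₀, (x t).1 < P.θ12 := by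
  intro t ht
  by_contra! h
  obtain ⟨σ, hσ, hxσ, hbefore⟩ :=
    (hx.continuousOn_fst.mono fun s hs => h0.trans hs.1).exists_first_eq ht hlt h
  have hxσ : (x σ).1 = P.θ12 := hxσ
  -- just before `σ`, `x₁` lies above the equilibrium, where it can only decrease
  have hnear : {s | P.K₁ / P.rate < (x s).1} ∈ 𝓝 σ :=
    (hx.continuousOn_fst.continuousAt (Ici_mem_nhds (h0.trans_lt hσ.1))).preimage_mem_nhds
      (Ioi_mem_nhds (hxσ ▸ P.equilibrium_lt_θ12))
  obtain ⟨l, hl, hlσ⟩ := exists_Ioc_subset_of_mem_nhds' hnear hσ.1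
  obtain ⟨τ, ⟨hlτ, hτσ⟩⟩ := exists_between hl.2
  have hstrip : ∀ s ∈ Ioo τ σ, P.θ11 < (x s).1 ∧ (x s).1 ≤ P.θ12 := fun s hs =>
    ⟨P.θ11_lt_equilibrium.trans (hlσ ⟨hlτ.trans hs.1, hs.2.le⟩),
      (hbefore s ⟨hl.1.trans (hlτ.trans hs.1).le, hs.2⟩).le⟩
  obtain ⟨τ', hτ', hne⟩ : ∃ τ' ∈ Ico τ σ, ∀ s ∈ Ioo τ' σ, (x s).2 ≠ P.θ21 := by
    by_cases hhit : ∃ p ∈ Ioo τ σ, (x p).2 = P.θ21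
    · obtain ⟨p, hp, hxp⟩ := hhit
      refine ⟨p, ⟨hp.1.le, hp.2⟩, fun s hs hxs => hs.1.ne ?_⟩
      exact hx.subsingleton_setOf_snd_eq (h0.trans (hl.1.trans (hlτ.le))) hstrip ⟨hp, hxp⟩
        ⟨⟨hp.1.trans hs.1, hs.2⟩, hxs⟩
    push Not at hhit
    exact ⟨τ, ⟨le_rfl, hτσ⟩, hhit⟩
  have hτ'₀ : t₀ ≤ τ' := hl.1.trans (hlτ.le.trans hτ'.1)
  have hdecr := hx.fst_lt_of_equilibrium_lt (h0.trans hτ'₀) hτ'.2 hne fun s hs =>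
    hlσ ⟨hlτ.trans_le (hτ'.1.trans hs.1), hs.2⟩
  linarith [hbefore τ' ⟨hτ'₀, hτ'.2⟩]

theorem fst_lt_θ11_of_snd_returns_above (hx : P.IsSolution x) {a b : ℝ} (ha : 0 ≤ a)
    (hab : a < b) (hxa : (x a).2 = P.θ21) (hxb : (x b).2 = P.θ21)
    (habove : ∀ t ∈ Ioo a b, P.θ21 < (x t).2) : (x b).1 < P.θ11 := by
  by_contra! hb
  have hne : ∀ t ∈ Ioo a b, (x t).2 ≠ P.θ21 := fun t ht => (habove t ht).ne'
  -- above `θ₂¹` the coordinate `x₁` decays exponentially, so it exceeded `θ₁¹` before `b`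
  have h1 : ∀ t ∈ Ioo a b, P.θ11 < (x t).1 := by
    intro t ht
    by_contra! htle
    have h := hx.fst_eq_exp (A := 0) (ha.trans ht.1.le) ht.2.le P.γ10_pos.ne'
      (fun s hs => hne s ⟨ht.1.trans hs.1, hs.2⟩) fun s hs _ => by
        rw [P.field_fst_of_θ21_lt (habove s ⟨ht.1.trans hs.1, hs.2⟩), zero_sub]
    rw [zero_div] at h
    linarith [add_sub_mul_exp_lt P.γ10_pos (sub_pos.2 ht.2) (P.θ11_pos.trans_le hb)
      (htle.trans hb)]
  exact P.γ20_mul_θ21_lt.ne' (hx.target_eq_of_snd_returns ha hab hxa hxb hne fun t ht _ =>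
    P.field_snd_of_θ21_lt_of_θ11_lt (habove t ht) (h1 t ht))

theorem false_of_snd_leaves_above (hx : P.IsSolution x) {a s : ℝ} (ha : 0 ≤ a) (has : a < s)
    (hxa : (x a).2 = P.θ21) (h1 : (x a).1 ≤ P.θ11) (habove : ∀ t ∈ Ioc a s, P.θ21 < (x t).2) :
    False := by
  have hne : ∀ t ∈ Ioo a s, (x t).2 ≠ P.θ21 := fun t ht => (habove t (Ioo_subset_Ioc_self ht)).ne'
  have hfst : ∀ t ∈ Ioo a s, (x t).1 < P.θ11 := by
    intro t ht
    rw [hx.fst_eq_exp (A := 0) ha ht.1.le P.γ10_pos.ne' (fun r hr => hne r ⟨hr.1, hr.2.trans ht.2⟩)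
      fun r hr _ => by
        rw [P.field_fst_of_θ21_lt (habove r ⟨hr.1, hr.2.le.trans ht.2.le⟩), zero_sub], zero_div]
    exact add_sub_mul_exp_lt P.γ10_pos (sub_pos.2 ht.1) P.θ11_pos h1
  have h := hx.snd_eq_exp (A := 0) ha has.le hne fun t ht _ => by
    rw [P.field_snd_of_le_θ11 (hfst t ht).le, zero_sub]
  rw [hxa, zero_div] at h
  linarith [habove s ⟨has, le_rfl⟩, add_sub_mul_exp_lt P.γ20_pos (sub_pos.2 has) P.θ21_pos le_rfl]

theorem false_of_snd_returns_above (hx : P.IsSolution x) {a b : ℝ} (ha : 0 ≤ a) (hab : a < b)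
    (hxa : (x a).2 = P.θ21) (hxb : (x b).2 = P.θ21) (habove : ∀ t ∈ Ioo a b, P.θ21 < (x t).2)
    (hge : ∀ t ≥ b, P.θ21 ≤ (x t).2) : False := by
  have hb0 : 0 ≤ b := ha.trans hab.le
  have hnear : {s | (x s).1 < P.θ11} ∈ 𝓝 b :=
    (hx.continuousOn_fst.continuousAt (Ici_mem_nhds (ha.trans_lt hab))).preimage_mem_nhds
      (Iio_mem_nhds (hx.fst_lt_θ11_of_snd_returns_above ha hab hxa hxb habove))
  obtain ⟨u, hu, hbu⟩ := exists_Ico_subset_of_mem_nhds' hnear (lt_add_one b)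
  obtain ⟨s, hs, hreg⟩ := hx.exists_regular hb0 hu.1
  obtain ⟨c, ⟨-, hxc⟩, hbc, hcs, hlast⟩ :=
    hx.isClosed_setOf_snd_eq.exists_last_mem_Icc ⟨hb0, hxb⟩ hs.1.le
  have hcs : c < s := lt_of_le_of_ne hcs fun h => hreg.2.2 (h ▸ hxc)
  exact hx.false_of_snd_leaves_above (hb0.trans hbc) hcs hxc (hbu ⟨hbc, hcs.trans hs.2⟩).le
    fun t ht => lt_of_le_of_ne (hge t (hbc.trans ht.1.le))
      fun h => hlast t ht ⟨hb0.trans (hbc.trans ht.1.le), h.symm⟩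

theorem exists_snd_lt_θ21 (hx : P.IsSolution x) {T : ℝ} (hT : 0 ≤ T) :
    ∃ t ≥ T, (x t).2 < P.θ21 := by
  by_contra! h
  rcases hx.snd_eventually_ne_or_exists_consecutive hT with
    ⟨s, hs, hne⟩ | ⟨a, b, ha, hab, hxa, hxb, hne⟩
  · have habove : ∀ t > s, P.θ21 < (x t).2 := fun t ht =>
      lt_of_le_of_ne (h t (hs.trans ht.le)) (hne t ht).symm
    have hlim₁ := hx.tendsto_fst (A := 0) (hT.trans hs) P.γ10_pos hne fun t ht _ => by
      rw [P.field_fst_of_θ21_lt (habove t ht), zero_sub]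
    rw [zero_div] at hlim₁
    obtain ⟨s', hs'⟩ := eventually_atTop.mp
      ((hlim₁.eventually (gt_mem_nhds P.θ11_pos)).and (eventually_gt_atTop s))
    have hss' := (hs' s' le_rfl).2
    have hlim₂ := hx.tendsto_snd (A := 0) (hT.trans (hs.trans hss'.le))
      (fun t ht => hne t (hss'.trans ht)) fun t ht _ => by
        rw [P.field_snd_of_le_θ11 (hs' t ht.le).1.le, zero_sub]
    rw [zero_div] at hlim₂
    obtain ⟨t, ht, htT⟩ :=
      ((hlim₂.eventually (gt_mem_nhds P.θ21_pos)).and (eventually_ge_atTop T)).exists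
    exact (h t htT).not_gt ht
  · exact hx.false_of_snd_returns_above (hT.trans ha) hab hxa hxb
      (fun t ht => lt_of_le_of_ne (h t (ha.trans ht.1.le)) (hne t ht).symm)
      fun t ht => h t (ha.trans (hab.le.trans ht))

theorem snd_lt_θ21_of_le (hx : P.IsSolution x) {T : ℝ} (hT : 0 ≤ T)
    (h12 : ∀ t ≥ T, (x t).1 < P.θ12) (h0 : (x T).2 < P.θ21) : ∀ t ≥ T, (x t).2 < P.θ21 := by
  refine forall_lt_of_eq_exp P.γ20_pos (hx.continuousOn_snd.mono (Ici_subset_Ici.2 hT))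
    (T := 0 / P.γ20) (by rw [zero_div]; exact P.θ21_pos) h0 fun b hb hbelow => ?_
  exact hx.snd_eq_exp hT hb.le (fun t ht => (hbelow t ⟨ht.1.le, ht.2⟩).ne) fun t ht _ => by
    rw [P.field_snd_of_le_θ21_of_le_θ12 (hbelow t ⟨ht.1.le, ht.2⟩).le (h12 t ht.1.le).le,
      zero_sub]

theorem exists_θ11_lt_fst (hx : P.IsSolution x) {T : ℝ} (hT : 0 ≤ T)
    (h2 : ∀ t ≥ T, (x t).2 < P.θ21) : ∃ t ≥ T, P.θ11 < (x t).1 := by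
  by_contra! h
  have hlim := hx.tendsto_fst hT P.γ10_pos (fun t ht => (h2 t ht.le).ne) fun t ht _ =>
    P.field_fst_of_le_θ21_of_le_θ11 (h2 t ht.le).le (h t ht.le)
  obtain ⟨t, ht, htT⟩ :=
    ((hlim.eventually (lt_mem_nhds P.θ11_lt_K₁_div_γ10)).and (eventually_ge_atTop T)).exists
  exact (h t htT).not_gt ht

theorem θ11_lt_fst_of_le (hx : P.IsSolution x) {T : ℝ} (hT : 0 ≤ T)
    (h2 : ∀ t ≥ T, (x t).2 < P.θ21) (h0 : P.θ11 < (x T).1) : ∀ t ≥ T, P.θ11 < (x t).1 := by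
  have hneg := forall_lt_of_eq_exp (u := fun t => -(x t).1) (c := -P.θ11)
    (T := -(P.K₁ / P.rate)) P.rate_pos (hx.continuousOn_fst.neg.mono (Ici_subset_Ici.2 hT))
    (neg_lt_neg P.θ11_lt_equilibrium) (neg_lt_neg h0) fun b hb hbelow => by
      rw [hx.fst_eq_exp hT hb.le P.rate_pos.ne' (fun t ht => (h2 t ht.1.le).ne) fun t ht _ =>
        P.field_fst_of_le_θ21_of_θ11_lt (h2 t ht.1.le).le
          (neg_lt_neg_iff.mp (hbelow t ⟨ht.1.le, ht.2⟩))]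
      ring
  exact fun t ht => neg_lt_neg_iff.mp (hneg t ht)

theorem tendsto (hx : P.IsSolution x) : Tendsto x atTop (𝓝 (P.K₁ / P.rate, 0)) := by
  obtain ⟨T₁, hT₁, h₁⟩ := hx.exists_fst_lt_θ12
  have hlow₁ := hx.fst_lt_θ12_of_le hT₁ h₁
  obtain ⟨T₂, hT₂, h₂⟩ := hx.exists_snd_lt_θ21 hT₁
  have hT₂₀ : 0 ≤ T₂ := hT₁.trans hT₂
  have hlow₂ := hx.snd_lt_θ21_of_le hT₂₀ (fun t ht => hlow₁ t (hT₂.trans ht)) h₂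
  obtain ⟨T₃, hT₃, h₃⟩ := hx.exists_θ11_lt_fst hT₂₀ hlow₂
  have hhigh₁ := hx.θ11_lt_fst_of_le (hT₂₀.trans hT₃) (fun t ht => hlow₂ t (hT₃.trans ht)) h₃
  have hlim₁ := hx.tendsto_fst (hT₂₀.trans hT₃) P.rate_pos
    (fun t ht => (hlow₂ t (hT₃.trans ht.le)).ne) fun t ht _ =>
      P.field_fst_of_le_θ21_of_θ11_lt (hlow₂ t (hT₃.trans ht.le)).le (hhigh₁ t ht.le)
  have hlim₂ := hx.tendsto_snd (A := 0) hT₂₀ (fun t ht => (hlow₂ t ht.le).ne) fun t ht _ => by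
    rw [P.field_snd_of_le_θ21_of_le_θ12 (hlow₂ t ht.le).le (hlow₁ t (hT₂.trans ht.le)).le,
      zero_sub]
  rw [zero_div] at hlim₂
  exact hlim₁.prodMk_nhds hlim₂

end ControlledSystem.IsSolution

/-- Under the qualitative feedback law `u = ū` on the boxes where `x₁ > θ₁¹` and
`x₂ < θ₂¹` (and `u = 0` elsewhere), with `ū` in the admissible interval, every
solution of the controlled system of Example 1 converges to the globally attractive
equilibrium `(K₁/(γ₁⁰+γ₁¹ū), 0)`: the limit cycle disappears. -/
theorem stmt1 (K₁ K₂ γ10 γ20 γ11 θ11 θ12 θ21 ubar : ℝ)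
    (hγ1 : 0 < γ10) (hγ2 : 0 < γ20) (hγ11 : 0 < γ11)
    (hθ11 : 0 < θ11) (hθ1 : θ11 < θ12) (hθ2 : 0 < θ21)
    (hK1 : γ10 * θ12 < K₁) (hK2 : γ20 * θ21 < K₂)
    (hu1 : (K₁ - γ10 * θ12) / (γ11 * θ12) < ubar)
    (hu2 : ubar < (K₁ - γ10 * θ11) / (γ11 * θ11))
    (f : ℝ × ℝ → ℝ × ℝ)
    (hf : ∀ p, f p =
      (K₁ * sm p.2 θ21 - (γ10 + γ11 * ubar * sp p.1 θ11 * sm p.2 θ21) * p.1,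
       K₂ * (sp p.1 θ11 * sp p.2 θ21 + sp p.1 θ12 * sm p.2 θ21) - γ20 * p.2))
    (R : ℝ × ℝ → Prop)
    (hR : ∀ p, R p ↔ (p.1 ≠ θ11 ∧ p.1 ≠ θ12 ∧ p.2 ≠ θ21)) :
    ∀ x : ℝ → ℝ × ℝ, IsSolOn f R x (Set.Ici 0) →
      x 0 ∈ Set.Ioo 0 (K₁ / γ10) ×ˢ Set.Ioo 0 (K₂ / γ20) →
      Tendsto x atTop (nhds (K₁ / (γ10 + γ11 * ubar), 0)) := by
  intro x hx _
  let P : ControlledSystem :=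
    ⟨K₁, K₂, γ10, γ20, γ11, θ11, θ12, θ21, ubar, hγ1, hγ2, hγ11, hθ11, hθ1, hθ2, hK1, hK2, hu1, hu2⟩
  have hfP : f = P.field := funext hf
  have hRP : R = P.Regular := funext fun p => propext (hR p)
  subst hfP hRP
  exact ControlledSystem.IsSolution.tendsto (P := P) hx
end

section
/- (At most one pair of parallel walls is successively crossed.) Let D = ∏_{i=1}^n (θᵢ⁻, θᵢ⁺) be a box, γᵢ > 0, and φ ∈ ℝⁿ a focal point such that every escaping direction is upward, i.e., the set I = {i : φᵢ > θᵢ⁺} is nonempty and, for every i, either φᵢ > θᵢ⁺ or θᵢ⁻ ≤ φᵢ ≤ θᵢ⁺ (so I_out = I_out⁺ = I). For i ∈ I put Tᵢ = (1/γᵢ)·ln((φᵢ − θᵢ⁻)/(φᵢ − θᵢ⁺)), and for x in the closure of D put τᵢ(x) = (1/γᵢ)·ln((φᵢ − xᵢ)/(φᵢ − θᵢ⁺)). Then: (a) an index i ∈ I has the property that some point x in the closure of D with xᵢ = θᵢ⁻ satisfies τᵢ(x) < τⱼ(x) for all j ∈ I with j ≠ i, if and only if Tᵢ < Tⱼ for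 all j ∈ I with j ≠ i; (b) consequently there is at most one index i ∈ I such that a trajectory of the flow Φᵢ(x,t) = φᵢ + e^{−γᵢt}(xᵢ − φᵢ) can enter D through the wall xᵢ = θᵢ⁻ and exit D through the opposite wall xᵢ = θᵢ⁺ strictly before reaching any other exit wall. -/
/-- Lemma 1 of the paper: at most one pair of parallel walls of a box can be
successively crossed by trajectories of the affine flow, and the distinguished
direction is characterised by minimality of the wall-to-wall travel times `Tᵢ`. -/
theorem stmt6 (n : ℕ) (hn : 1 ≤ n) (θm θp γ φ : Fin n → ℝ)
    (hθ : ∀ i, θm i < θp i) (hγ : ∀ i, 0 < γ i)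
    (I : Set (Fin n)) (hI : I = {i | θp i < φ i}) (hne : I.Nonempty)
    (hdir : ∀ i, θp i < φ i ∨ (θm i ≤ φ i ∧ φ i ≤ θp i))
    (T : Fin n → ℝ)
    (hT : ∀ i, T i = (1 / γ i) * Real.log ((φ i - θm i) / (φ i - θp i)))
    (τ : Fin n → (Fin n → ℝ) → ℝ)
    (hτ : ∀ i x, τ i x = (1 / γ i) * Real.log ((φ i - x i) / (φ i - θp i)))
    (Φ : (Fin n → ℝ) → ℝ → Fin n → ℝ)
    (hΦ : ∀ x t i, Φ x t i = φ i + Real.exp (-(γ i) * t) * (x i - φ i)) :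
    -- (a) characterisation by the travel times
    (∀ i ∈ I,
      ((∃ x : Fin n → ℝ, (∀ k, x k ∈ Set.Icc (θm k) (θp k)) ∧ x i = θm i ∧
          ∀ j ∈ I, j ≠ i → τ i x < τ j x) ↔
        (∀ j ∈ I, j ≠ i → T i < T j))) ∧
    -- (b) at most one direction with a trajectory entering through the lower wall
    -- and exiting through the opposite wall strictly before any other exit wall
    (∀ i₁ ∈ I, ∀ i₂ ∈ I,
      (∃ x : Fin n → ℝ, (∀ k, x k ∈ Set.Icc (θm k) (θp k)) ∧ x i₁ = θm i₁ ∧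
        ∃ t > 0, Φ x t i₁ = θp i₁ ∧
          ∀ j ∈ I, j ≠ i₁ → ∀ s ∈ Set.Icc 0 t, Φ x s j < θp j) →
      (∃ x : Fin n → ℝ, (∀ k, x k ∈ Set.Icc (θm k) (θp k)) ∧ x i₂ = θm i₂ ∧
        ∃ t > 0, Φ x t i₂ = θp i₂ ∧
          ∀ j ∈ I, j ≠ i₂ → ∀ s ∈ Set.Icc 0 t, Φ x s j < θp j) →
      i₁ = i₂) := by
  subst hI
  -- τ j x ≤ T j for x in the closed box, j escaping
  have key : ∀ j : Fin n, θp j < φ j → ∀ x : Fin n → ℝ,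
      (∀ k, x k ∈ Set.Icc (θm k) (θp k)) → τ j x ≤ T j := by
    intro j hj x hx
    have h1 : θm j ≤ x j := (hx j).1
    have h2 : x j ≤ θp j := (hx j).2
    have hd : 0 < φ j - θp j := by linarith
    have hxj : 0 < φ j - x j := by linarith
    rw [hτ, hT]
    have hlog : Real.log ((φ j - x j) / (φ j - θp j)) ≤
        Real.log ((φ j - θm j) / (φ j - θp j)) := by
      apply Real.log_le_log (by positivity)
      gcongr
    have hg : (0:ℝ) ≤ 1 / γ j := le_of_lt (one_div_pos.mpr (hγ j))
    exact mul_le_mul_of_nonneg_left hlog hg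
  -- main lemma for part (b): a wall-to-wall trajectory forces T i < T j
  have main : ∀ i : Fin n, θp i < φ i →
      (∃ x : Fin n → ℝ, (∀ k, x k ∈ Set.Icc (θm k) (θp k)) ∧ x i = θm i ∧
        ∃ t > 0, Φ x t i = θp i ∧
          ∀ j ∈ {i | θp i < φ i}, j ≠ i → ∀ s ∈ Set.Icc 0 t, Φ x s j < θp j) →
      ∀ j : Fin n, θp j < φ j → j ≠ i → T i < T j := by
    intro i hi ⟨x, hx, hxi, t, ht, hΦt, hwall⟩ j hj hji
    have hdi : 0 < φ i - θp i := by linarith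
    have hmi : 0 < φ i - θm i := by have := hθ i; linarith
    -- compute t = T i
    have h := (hΦ x t i).symm.trans hΦt
    rw [hxi] at h
    have hexp : Real.exp (-(γ i) * t) * (φ i - θm i) = φ i - θp i := by
      ring_nf at h ⊢; linarith
    have hlog : -(γ i) * t = Real.log (φ i - θp i) - Real.log (φ i - θm i) := by
      have h2 := congrArg Real.log hexp
      rw [Real.log_mul (Real.exp_ne_zero _) (ne_of_gt hmi), Real.log_exp] at h2
      linarith
    have hγi := hγ i
    have hti : t = T i := by
      rw [hT, Real.log_div (ne_of_gt hmi) (ne_of_gt hdi)]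
      field_simp
      linarith [hlog]
    -- the other wall j
    have hdj : 0 < φ j - θp j := by linarith
    have hxj : 0 < φ j - x j := by have := (hx j).2; linarith
    have hw := hwall j hj hji t ⟨le_of_lt ht, le_refl t⟩
    rw [hΦ] at hw
    have h2 : (φ j - θp j) / (φ j - x j) < Real.exp (-(γ j) * t) := by
      rw [div_lt_iff₀ hxj]
      ring_nf at hw ⊢; linarith
    have h3 : Real.log ((φ j - θp j) / (φ j - x j)) < -(γ j) * t := by
      have := Real.log_lt_log (by positivity) h2
      rwa [Real.log_exp] at this
    rw [Real.log_div (ne_of_gt hdj) (ne_of_gt hxj)] at h3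
    have hγj := hγ j
    have hτjx : t < τ j x := by
      rw [hτ, Real.log_div (ne_of_gt hxj) (ne_of_gt hdj)]
      have hlt : γ j * t < Real.log (φ j - x j) - Real.log (φ j - θp j) := by linarith
      calc t = (1 / γ j) * (γ j * t) := by field_simp
        _ < _ := by
            apply mul_lt_mul_of_pos_left hlt (by positivity)
    have := key j hj x hx
    linarith [hti ▸ hτjx]
  constructor
  · intro i hiI
    have hi : θp i < φ i := hiI
    constructor
    · rintro ⟨x, hx, hxi, hlt⟩ j hjI hji
      have hj : θp j < φ j := hjI
      have hτi : τ i x = T i := by rw [hτ, hT, hxi]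
      have h1 := hlt j hjI hji
      have h2 := key j hj x hx
      linarith [hτi ▸ h1]
    · intro h
      refine ⟨θm, fun k => ⟨le_refl _, (hθ k).le⟩, rfl, ?_⟩
      intro j hjI hji
      have e : ∀ k : Fin n, τ k θm = T k := fun k => by rw [hτ, hT]
      rw [e, e]
      exact h j hjI hji
  · intro i₁ h1 i₂ h2 e1 e2
    by_contra hne12
    have A := main i₁ h1 e1 i₂ h2 (fun h => hne12 (h.symm))
    have B := main i₂ h2 e2 i₁ h1 hne12
    exact lt_asymm A B
end

section
/- (Finite exit from a box.) Let D = ∏_{i=1}^n (θᵢ⁻, θᵢ⁺) be a box, γᵢ > 0, φ ∈ ℝⁿ, and suppose the set of escaping directions I = I⁺ ∪ I⁻ is nonempty, where I⁺ = {i : φᵢ > θᵢ⁺} and I⁻ = {i : φᵢ < θᵢ⁻} (equivalently, φ does not belong to the closure of D). For x ∈ D define τᵢ(x) = −(1/γᵢ)·ln((φᵢ − θᵢ⁺)/(φᵢ − xᵢ)) for i ∈ I⁺, τᵢ(x) = −(1/γᵢ)·ln((φᵢ − θᵢ⁻)/(φᵢ − xᵢ)) for i ∈ I⁻, and τ(x)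 = min_{i∈I} τᵢ(x). Then for every x ∈ D: 0 < τ(x) < ∞; the flow Φ(x,t), with Φᵢ(x,t) = φᵢ + e^{−γᵢt}(xᵢ − φᵢ), satisfies Φ(x,t) ∈ D for all 0 ≤ t < τ(x); Φ(x,τ(x)) lies on the topological boundary of D; and for any index i ∈ I attaining the minimum, the i-th coordinate of Φ(x,τ(x)) equals θᵢ⁺ if i ∈ I⁺ and θᵢ⁻ if i ∈ I⁻. -/
/-!
Each coordinate of the flow moves monotonically from `xᵢ` towards `φᵢ`. If `φᵢ` lies beyond a
wall `θ` of the interval, the coordinate crosses `θ` exactly once, at the time `τᵢ(x)` solving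
`e^{-γᵢ t} = (φᵢ - θ) / (φᵢ - xᵢ)`; otherwise it stays strictly inside for all `t ≥ 0`, being a
convex combination of `xᵢ` and `φᵢ` with positive weight on `xᵢ`. Hence, for `t ≥ 0`,
`Φ(x,t) ∈ D` exactly when `t < τᵢ(x)` for every escaping `i`, that is when `t < τ(x)`. The point
`Φ(x,τ(x))` is therefore not in `D` but is a limit of points of `D`, so it lies on the frontier.
-/

open Real Set Filter Topology

noncomputable def affineFlow (γ φ x t : ℝ) : ℝ := φ + exp (-γ * t) * (x - φ)

noncomputable def hitTime (γ φ θ x : ℝ) : ℝ := -(1 / γ) * log ((φ - θ) / (φ - x))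

noncomputable def exitTime (γ a b φ x : ℝ) : ℝ :=
  if b < φ then hitTime γ φ b x else hitTime γ φ a x

section AffineFlow

variable {γ φ θ x a b t : ℝ}

@[simp]
lemma affineFlow_zero : affineFlow γ φ x 0 = x := by
  simp [affineFlow]

lemma continuous_affineFlow : Continuous (affineFlow γ φ x) := by
  unfold affineFlow
  fun_prop

lemma strictMono_affineFlow (hγ : 0 < γ) (h : x < φ) : StrictMono (affineFlow γ φ x) := by
  intro s t hst
  have hexp : exp (-γ * t) < exp (-γ * s) := exp_lt_exp.2 (by nlinarith)
  exact add_lt_add_right (mul_lt_mul_of_neg_right hexp (sub_neg.2 h)) φ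

lemma strictAnti_affineFlow (hγ : 0 < γ) (h : φ < x) : StrictAnti (affineFlow γ φ x) := by
  intro s t hst
  have hexp : exp (-γ * t) < exp (-γ * s) := exp_lt_exp.2 (by nlinarith)
  exact add_lt_add_right (mul_lt_mul_of_pos_right hexp (sub_pos.2 h)) φ

lemma lt_affineFlow (hγ : 0 ≤ γ) (ht : 0 ≤ t) (hax : a < x) (haφ : a ≤ φ) :
    a < affineFlow γ φ x t := by
  have he₀ : 0 < exp (-γ * t) := exp_pos _
  have he₁ : exp (-γ * t) ≤ 1 := exp_le_one_iff.2 (by nlinarith)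
  unfold affineFlow
  nlinarith [mul_pos he₀ (sub_pos.2 hax), mul_nonneg (sub_nonneg.2 he₁) (sub_nonneg.2 haφ)]

lemma affineFlow_lt (hγ : 0 ≤ γ) (ht : 0 ≤ t) (hxb : x < b) (hφb : φ ≤ b) :
    affineFlow γ φ x t < b := by
  have he₀ : 0 < exp (-γ * t) := exp_pos _
  have he₁ : exp (-γ * t) ≤ 1 := exp_le_one_iff.2 (by nlinarith)
  unfold affineFlow
  nlinarith [mul_pos he₀ (sub_pos.2 hxb), mul_nonneg (sub_nonneg.2 he₁) (sub_nonneg.2 hφb)]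

lemma affineFlow_hitTime (hγ : γ ≠ 0) (h : 0 < (φ - θ) / (φ - x)) :
    affineFlow γ φ x (hitTime γ φ θ x) = θ := by
  have hφx : φ - x ≠ 0 := fun h₀ => by simp [h₀] at h
  have hexp : -γ * hitTime γ φ θ x = log ((φ - θ) / (φ - x)) := by
    unfold hitTime
    field_simp
  rw [affineFlow, hexp, exp_log h]
  field_simp
  ring

lemma affineFlow_lt_iff_lt_hitTime (hγ : 0 < γ) (hxθ : x < θ) (hθφ : θ < φ) :
    affineFlow γ φ x t < θ ↔ t < hitTime γ φ θ x := by
  have hhit : affineFlow γ φ x (hitTime γ φ θ x) = θ :=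
    affineFlow_hitTime hγ.ne' (div_pos (by linarith) (by linarith))
  conv_lhs => rw [← hhit]
  exact (strictMono_affineFlow hγ (hxθ.trans hθφ)).lt_iff_lt

lemma lt_affineFlow_iff_lt_hitTime (hγ : 0 < γ) (hφθ : φ < θ) (hθx : θ < x) :
    θ < affineFlow γ φ x t ↔ t < hitTime γ φ θ x := by
  have hhit : affineFlow γ φ x (hitTime γ φ θ x) = θ :=
    affineFlow_hitTime hγ.ne' (div_pos_of_neg_of_neg (by linarith) (by linarith))
  conv_lhs => rw [← hhit]
  exact (strictAnti_affineFlow hγ (hφθ.trans hθx)).lt_iff_gt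

lemma affineFlow_mem_Ioo_iff (hγ : 0 < γ) (hx : x ∈ Ioo a b) (ht : 0 ≤ t) :
    affineFlow γ φ x t ∈ Ioo a b ↔ (b < φ ∨ φ < a → t < exitTime γ a b φ x) := by
  obtain ⟨hax, hxb⟩ := hx
  unfold exitTime
  by_cases hb : b < φ
  · simp only [hb, true_or, forall_const, if_true, mem_Ioo]
    rw [← affineFlow_lt_iff_lt_hitTime hγ hxb hb]
    exact and_iff_right (lt_affineFlow hγ.le ht hax (by linarith))
  · by_cases ha : φ < a
    · simp only [hb, ha, or_true, forall_const, if_false, mem_Ioo]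
      rw [← lt_affineFlow_iff_lt_hitTime hγ ha hax]
      exact and_iff_left (affineFlow_lt hγ.le ht hxb (by linarith))
    · simp only [hb, ha, or_self, false_implies, iff_true]
      exact ⟨lt_affineFlow hγ.le ht hax (not_lt.1 ha), affineFlow_lt hγ.le ht hxb (not_lt.1 hb)⟩

lemma affineFlow_exitTime (hγ : 0 < γ) (hx : x ∈ Ioo a b) (hφ : b < φ ∨ φ < a) :
    affineFlow γ φ x (exitTime γ a b φ x) = if b < φ then b else a := by
  obtain ⟨hax, hxb⟩ := hx
  unfold exitTime
  split_ifs with hb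
  · exact affineFlow_hitTime hγ.ne' (div_pos (by linarith) (by linarith))
  · have ha := hφ.resolve_left hb
    exact affineFlow_hitTime hγ.ne' (div_pos_of_neg_of_neg (by linarith) (by linarith))

end AffineFlow

theorem stmt10_general (n : ℕ) (θm θp γ φ : Fin n → ℝ)
    (hγ : ∀ i, 0 < γ i)
    (I : Finset (Fin n))
    (hI : I = Finset.univ.filter fun i => θp i < φ i ∨ φ i < θm i)
    (hne : I.Nonempty)
    (τi : Fin n → (Fin n → ℝ) → ℝ)
    (hτi : ∀ i x, τi i x =
      if θp i < φ i then -(1 / γ i) * Real.log ((φ i - θp i) / (φ i - x i))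
      else -(1 / γ i) * Real.log ((φ i - θm i) / (φ i - x i)))
    (τ : (Fin n → ℝ) → ℝ)
    (hτ : ∀ x, τ x = I.inf' hne fun i => τi i x)
    (Φ : (Fin n → ℝ) → ℝ → Fin n → ℝ)
    (hΦ : ∀ x t i, Φ x t i = φ i + Real.exp (-(γ i) * t) * (x i - φ i))
    (D : Set (Fin n → ℝ)) (hD : D = {y | ∀ i, y i ∈ Set.Ioo (θm i) (θp i)})
    (x : Fin n → ℝ) (hx : x ∈ D) :
    0 < τ x ∧
    (∀ t, 0 ≤ t → t < τ x → Φ x t ∈ D) ∧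
    Φ x (τ x) ∈ frontier D ∧
    (∀ i ∈ I, τi i x = τ x →
      (if θp i < φ i then Φ x (τ x) i = θp i else Φ x (τ x) i = θm i)) := by
  subst hD
  have hΦx : Φ x = fun t i => affineFlow (γ i) (φ i) (x i) t := funext fun t => funext (hΦ x t)
  have hτix : ∀ i, τi i x = exitTime (γ i) (θm i) (θp i) (φ i) (x i) := fun i => hτi i x
  have hmem : ∀ t, 0 ≤ t → (Φ x t ∈ {y | ∀ i, y i ∈ Ioo (θm i) (θp i)} ↔ t < τ x) := by
    intro t ht
    simp only [hτ, Finset.lt_inf'_iff, hI, Finset.mem_filter, Finset.mem_univ, true_and, hτix,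
      hΦx, mem_ofPred_eq, affineFlow_mem_Ioo_iff (hγ _) (hx _) ht]
  have hpos : 0 < τ x := (hmem 0 le_rfl).1 (by simpa [hΦx] using hx)
  have hclosure : Φ x (τ x) ∈ closure {y | ∀ i, y i ∈ Ioo (θm i) (θp i)} := by
    have hcont : Continuous (Φ x) := by
      rw [hΦx]
      exact continuous_pi fun i => continuous_affineFlow
    have hlim : Tendsto (Φ x) (𝓝[<] τ x) (𝓝 (Φ x (τ x))) := hcont.continuousWithinAt.tendsto
    refine mem_closure_of_tendsto hlim ?_
    filter_upwards [Ioo_mem_nhdsLT hpos] with t ht using (hmem t ht.1.le).2 ht.2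
  refine ⟨hpos, fun t ht htτ => (hmem t ht).2 htτ,
    ⟨hclosure, fun h => ((hmem _ hpos.le).1 (interior_subset h)).false⟩, ?_⟩
  intro i hi hτeq
  have hφi : θp i < φ i ∨ φ i < θm i := by simpa [hI] using hi
  rw [← hτeq, hτix, hΦx]
  dsimp only
  rw [affineFlow_exitTime (hγ i) (hx i) hφi]
  split_ifs <;> rfl

/-- Finite exit from a box: if the focal point has at least one escaping direction,
then from every interior point the affine flow leaves the box at the finite positive
exit time `τ(x) = min over escaping directions of the switching times`, staying inside
before, hitting the boundary at `τ(x)`, on the wall(s) attaining the minimum. -/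
theorem stmt10 (n : ℕ) (hn : 1 ≤ n) (θm θp γ φ : Fin n → ℝ)
    (hθ : ∀ i, θm i < θp i) (hγ : ∀ i, 0 < γ i)
    (I : Finset (Fin n))
    (hI : I = Finset.univ.filter fun i => θp i < φ i ∨ φ i < θm i)
    (hne : I.Nonempty)
    (τi : Fin n → (Fin n → ℝ) → ℝ)
    (hτi : ∀ i x, τi i x =
      if θp i < φ i then -(1 / γ i) * Real.log ((φ i - θp i) / (φ i - x i))
      else -(1 / γ i) * Real.log ((φ i - θm i) / (φ i - x i)))
    (τ : (Fin n → ℝ) → ℝ)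
    (hτ : ∀ x, τ x = I.inf' hne fun i => τi i x)
    (Φ : (Fin n → ℝ) → ℝ → Fin n → ℝ)
    (hΦ : ∀ x t i, Φ x t i = φ i + Real.exp (-(γ i) * t) * (x i - φ i))
    (D : Set (Fin n → ℝ)) (hD : D = {y | ∀ i, y i ∈ Set.Ioo (θm i) (θp i)})
    (x : Fin n → ℝ) (hx : x ∈ D) :
    0 < τ x ∧
    (∀ t, 0 ≤ t → t < τ x → Φ x t ∈ D) ∧
    Φ x (τ x) ∈ frontier D ∧
    (∀ i ∈ I, τi i x = τ x →
      (if θp i < φ i then Φ x (τ x) i = θp i else Φ x (τ x) i = θm i)) :=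
  stmt10_general n θm θp γ φ hγ I hI hne τi hτi τ hτ Φ hΦ D hD x hx
end
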